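/- ∫₀^{π/2} θ·log(tan θ) dθ = (7/8)·ζ(3). -/

import Mathlib

open Real Filter Topology Set MeasureTheory Interval
open Complex (I)

/-!
For `|r| < 1`, the Taylor series of `log (1 - z) - log (1 + z)` at `z = r e^{2iθ}` gives
`log |1 - r e^{2iθ}| - log |1 + r e^{2iθ}| = -2 ∑ r^(2k+1) cos (2(2k+1)θ) / (2k+1)`, uniformly in
`θ`, and integrating termwise against `θ` over `[0, π/2]` gives `∑ r^(2k+1) / (2k+1)³`.
As `r → 1⁻` the left side tends to `log (2 sin θ) - log (2 cos θ) = log tan θ`, and both sides pass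
to the limit by dominated convergence: the integrals thanks to the integrable bound
`|log |1 ± r e^{2iθ}|| ≤ log 2 - log (sin 2θ)`, the series since its terms are at most `1/(2k+1)³`.
Finally `∑ 1/(2k+1)³ = (1 - 1/8) ζ(3)` by splitting `ζ(3)` into its even and odd terms.
-/

lemma integral_mul_cos {a : ℝ} (ha : a ≠ 0) (b : ℝ) :
    ∫ x in (0:ℝ)..b, x * cos (a * x) = b * sin (a * b) / a + (cos (a * b) - 1) / a ^ 2 := by
  have hderiv : ∀ x ∈ uIcc 0 b, HasDerivAt (fun x => x * sin (a * x) / a + cos (a * x) / a ^ 2)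
      (x * cos (a * x)) x := by
    intro x _
    have hax : HasDerivAt (fun x => a * x) a x := by simpa using (hasDerivAt_id x).const_mul a
    refine ((((hasDerivAt_id' x).mul hax.sin).div_const a).add
      (hax.cos.div_const (a ^ 2))).congr_deriv ?_
    field_simp
    ring
  rw [intervalIntegral.integral_eq_sub_of_hasDerivAt hderiv
    ((by fun_prop : Continuous fun x => x * cos (a * x)).intervalIntegrable _ _)]
  simp
  ring

lemma integral_mul_cos_two_mul_odd (k : ℕ) :
    ∫ θ in (0:ℝ)..π / 2, θ * cos (2 * (2 * k + 1) * θ) = -1 / (2 * (2 * k + 1) ^ 2) := by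
  have hπ : 2 * (2 * (k : ℝ) + 1) * (π / 2) = (2 * k + 1 : ℕ) * π := by push_cast; ring
  rw [integral_mul_cos (by positivity), hπ, sin_nat_mul_pi, cos_nat_mul_pi,
    (Odd.neg_one_pow ⟨k, rfl⟩)]
  field_simp
  ring

namespace Complex
lemma hasSum_log_sub_log_of_norm_lt_one {z : ℂ} (hz : ‖z‖ < 1) :
    HasSum (fun k : ℕ => 2 * (z ^ (2 * k + 1) / (2 * k + 1))) (log (1 + z) - log (1 - z)) := by
  set term := fun n : ℕ => z ^ (n + 1) / (n + 1) - (-z) ^ (n + 1) / (n + 1)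
  have hterm : term ∘ (2 * ·) = fun k : ℕ => 2 * (z ^ (2 * k + 1) / (2 * k + 1)) := by
    ext k
    simp only [term, Function.comp, Odd.neg_pow (⟨k, rfl⟩ : Odd (2 * k + 1))]
    push_cast
    ring
  rw [← hterm, (mul_right_injective₀ (two_ne_zero' ℕ)).hasSum_iff]
  · convert! (hasSum_taylorSeries_neg_log' hz).sub
      (hasSum_taylorSeries_neg_log' (norm_neg z ▸ hz)) using 1
    simp only [sub_neg_eq_add]
    ring
  · intro n hn
    rw [range_two_mul, Set.mem_ofPred_eq, ← Nat.even_add_one] at hn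
    simp [term, hn.neg_pow]

end Complex

lemma re_ofReal_mul_exp_pow (r φ : ℝ) (n : ℕ) :
    ((r * Complex.exp (φ * I)) ^ n).re = r ^ n * cos (n * φ) := by
  rw [mul_pow, ← Complex.exp_nat_mul, ← Complex.ofReal_pow,
    show (n : ℂ) * (φ * I) = ↑(n * φ) * I by push_cast; ring,
    Complex.re_ofReal_mul, Complex.exp_ofReal_mul_I_re]

lemma one_sub_ofReal_mul (r : ℝ) (z : ℂ) : 1 - r * z = 1 + ↑(-r) * z := by
  push_cast
  ring

lemma sq_norm_one_add_ofReal_mul_exp (r φ : ℝ) :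
    ‖1 + r * Complex.exp (φ * I)‖ ^ 2 = (r + cos φ) ^ 2 + sin φ ^ 2 := by
  rw [Complex.sq_norm, Complex.normSq_apply]
  simp only [Complex.add_re, Complex.add_im, Complex.mul_re, Complex.mul_im, Complex.one_re,
    Complex.one_im, Complex.ofReal_re, Complex.ofReal_im, Complex.exp_ofReal_mul_I_re,
    Complex.exp_ofReal_mul_I_im]
  linear_combination (r ^ 2 - 1) * sin_sq_add_cos_sq φ

lemma norm_one_add_exp_two_mul (θ : ℝ) :
    ‖1 + Complex.exp (↑(2 * θ) * I)‖ = 2 * |cos θ| := by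
  refine (sq_eq_sq₀ (norm_nonneg _) (by positivity)).1 ?_
  have h := sq_norm_one_add_ofReal_mul_exp 1 (2 * θ)
  rw [Complex.ofReal_one, one_mul] at h
  rw [h, mul_pow, sq_abs, cos_two_mul, sin_two_mul]
  linear_combination (4 * cos θ ^ 2) * sin_sq_add_cos_sq θ

lemma norm_one_sub_exp_two_mul (θ : ℝ) :
    ‖1 - Complex.exp (↑(2 * θ) * I)‖ = 2 * |sin θ| := by
  refine (sq_eq_sq₀ (norm_nonneg _) (by positivity)).1 ?_
  have h := sq_norm_one_add_ofReal_mul_exp (-1) (2 * θ)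
  rw [Complex.ofReal_neg, Complex.ofReal_one, neg_one_mul, ← sub_eq_add_neg] at h
  rw [h, mul_pow, sq_abs, cos_two_mul, sin_two_mul]
  linear_combination (4 * (cos θ ^ 2 - 1)) * sin_sq_add_cos_sq θ

lemma abs_log_le_of_mem_Icc {s t x : ℝ} (hs : 0 < s) (hs1 : s ≤ 1) (ht1 : 1 ≤ t)
    (hx : x ∈ Icc s t) : |log x| ≤ log t - log s := by
  have hx0 : 0 < x := hs.trans_le hx.1
  rw [abs_le]
  constructor
  · linarith [log_le_log hs hx.1, log_nonneg ht1]
  · linarith [log_le_log hx0 hx.2, log_nonpos hs.le hs1]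

lemma abs_log_norm_one_add_ofReal_mul_exp_le {r φ : ℝ} (hr : |r| ≤ 1) (hφ : 0 < sin φ) :
    |log ‖1 + r * Complex.exp (φ * I)‖| ≤ log 2 - log (sin φ) := by
  refine abs_log_le_of_mem_Icc hφ (sin_le_one φ) one_le_two ⟨?_, ?_⟩
  · have h := sq_norm_one_add_ofReal_mul_exp r φ
    nlinarith [norm_nonneg (1 + r * Complex.exp (φ * I))]
  · calc ‖1 + r * Complex.exp (φ * I)‖ ≤ 1 + |r| := by
          simpa [Complex.norm_exp_ofReal_mul_I] using norm_add_le 1 (r * Complex.exp (φ * I))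
      _ ≤ 2 := by linarith

noncomputable def abelLogTan (r θ : ℝ) : ℝ :=
  log ‖1 - r * Complex.exp (↑(2 * θ) * I)‖ - log ‖1 + r * Complex.exp (↑(2 * θ) * I)‖

lemma hasSum_abelLogTan {r : ℝ} (hr : |r| < 1) (θ : ℝ) :
    HasSum (fun k : ℕ => -2 * r ^ (2 * k + 1) * cos (2 * (2 * k + 1) * θ) / (2 * k + 1))
      (abelLogTan r θ) := by
  set z : ℂ := r * Complex.exp (↑(2 * θ) * I)
  have hz : ‖z‖ < 1 := by
    rwa [norm_mul, Complex.norm_exp_ofReal_mul_I, mul_one, Complex.norm_real, norm_eq_abs]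
  have h := (Complex.reCLM.hasSum (Complex.hasSum_log_sub_log_of_norm_lt_one hz)).neg
  convert! h using 1
  · ext k
    have hcoeff : 2 * (z ^ (2 * k + 1) / (2 * k + 1))
        = ↑(2 / (2 * k + 1) : ℝ) * z ^ (2 * k + 1) := by
      push_cast
      ring
    rw [Complex.reCLM_apply, hcoeff, Complex.re_ofReal_mul, re_ofReal_mul_exp_pow]
    push_cast
    rw [show (2 * (k : ℝ) + 1) * (2 * θ) = 2 * (2 * k + 1) * θ by ring]
    ring
  · simp [abelLogTan, z, Complex.log_re]

lemma hasSum_integral_mul_abelLogTan {r : ℝ} (hr : |r| < 1) :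
    HasSum (fun k : ℕ => 1 / (2 * k + 1) ^ 3 * r ^ (2 * k + 1))
      (∫ θ in (0:ℝ)..π / 2, θ * abelLogTan r θ) := by
  have hterm (k : ℕ) : ∫ θ in (0:ℝ)..π / 2,
      θ * (-2 * r ^ (2 * k + 1) * cos (2 * (2 * k + 1) * θ) / (2 * k + 1))
        = 1 / (2 * k + 1) ^ 3 * r ^ (2 * k + 1) := by
    have hconst (θ : ℝ) : θ * (-2 * r ^ (2 * k + 1) * cos (2 * (2 * k + 1) * θ) / (2 * k + 1))
        = -2 * r ^ (2 * k + 1) / (2 * k + 1) * (θ * cos (2 * (2 * k + 1) * θ)) := by ring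
    simp only [hconst, intervalIntegral.integral_const_mul, integral_mul_cos_two_mul_odd]
    field_simp
  have hgeom : Summable fun k : ℕ => |r| ^ (2 * k + 1) :=
    (summable_geometric_of_lt_one (abs_nonneg r) hr).comp_injective
      (strictMono_mul_left_of_pos two_pos |>.add_const 1 |>.injective)
  simp only [← hterm]
  refine intervalIntegral.hasSum_integral_of_dominated_convergence
    (fun k _ => π / 2 * (2 * |r| ^ (2 * k + 1))) (fun k => by fun_prop) ?_ ?_ ?_ ?_
  · intro k
    refine ae_of_all _ fun θ hθ => ?_
    rw [uIoc_of_le (by positivity)] at hθ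
    have hk : (1 : ℝ) ≤ 2 * k + 1 := by linarith [k.cast_nonneg (α := ℝ)]
    rw [norm_mul, norm_eq_abs θ, abs_of_pos hθ.1]
    gcongr
    · exact hθ.2
    · rw [norm_div, norm_mul, norm_mul, norm_neg, norm_pow, norm_eq_abs, norm_eq_abs,
        norm_eq_abs, norm_eq_abs, abs_of_pos (by positivity : (0 : ℝ) < 2 * k + 1)]
      calc |2| * |r| ^ (2 * k + 1) * |cos (2 * (2 * k + 1) * θ)| / (2 * k + 1)
          ≤ 2 * |r| ^ (2 * k + 1) * 1 / 1 := by
            gcongr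
            · norm_num
            · exact abs_cos_le_one _
        _ = 2 * |r| ^ (2 * k + 1) := by ring
  · exact ae_of_all _ fun θ _ => (hgeom.mul_left 2).mul_left (π / 2)
  · exact intervalIntegrable_const
  · exact ae_of_all _ fun θ _ => (hasSum_abelLogTan hr θ).mul_left θ

lemma abs_abelLogTan_le {r θ : ℝ} (hr : |r| ≤ 1) (hθ : 0 < sin (2 * θ)) :
    |abelLogTan r θ| ≤ 2 * (log 2 - log (sin (2 * θ))) := by
  rw [abelLogTan, one_sub_ofReal_mul]
  have h₁ := abs_log_norm_one_add_ofReal_mul_exp_le (r := -r) (by rwa [abs_neg]) hθ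
  have h₂ := abs_log_norm_one_add_ofReal_mul_exp_le hr hθ
  linarith [abs_sub _ _ |>.trans (add_le_add h₁ h₂)]

lemma abelLogTan_one {θ : ℝ} (hs : sin θ ≠ 0) (hc : cos θ ≠ 0) :
    abelLogTan 1 θ = log (tan θ) := by
  rw [abelLogTan, Complex.ofReal_one, one_mul, norm_one_sub_exp_two_mul,
    norm_one_add_exp_two_mul, ← log_div (by positivity) (by positivity),
    mul_div_mul_left _ _ two_ne_zero, ← abs_div, ← tan_eq_sin_div_cos, log_abs]

lemma tendsto_abelLogTan_one {θ : ℝ} (hs : sin θ ≠ 0) (hc : cos θ ≠ 0) :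
    Tendsto (abelLogTan · θ) (𝓝 1) (𝓝 (log (tan θ))) := by
  rw [← abelLogTan_one hs hc]
  refine ContinuousAt.sub ?_ ?_ <;> refine ContinuousAt.log (by fun_prop) ?_
  · simp only [Complex.ofReal_one, one_mul, norm_one_sub_exp_two_mul]
    exact mul_ne_zero two_ne_zero (abs_ne_zero.2 hs)
  · simp only [Complex.ofReal_one, one_mul, norm_one_add_exp_two_mul]
    exact mul_ne_zero two_ne_zero (abs_ne_zero.2 hc)

lemma ae_mem_uIoc_imp_of_forall_mem_Ioo {p : ℝ → Prop} {a b : ℝ} (hab : a ≤ b)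
    (h : ∀ x ∈ Ioo a b, p x) : ∀ᵐ x, x ∈ Ι a b → p x := by
  rw [uIoc_of_le hab]
  filter_upwards [Ioo_ae_eq_Ioc (μ := volume) (a := a) (b := b)] with x hx hxIoc
  exact h x (cast hx.symm hxIoc)

lemma intervalIntegrable_log_sin_two_mul :
    IntervalIntegrable (fun θ => log (sin (2 * θ))) volume 0 (π / 2) := by
  simpa using (intervalIntegrable_log_sin (a := 0) (b := π)).comp_mul_left (c := 2)

lemma tendsto_integral_mul_abelLogTan :
    Tendsto (fun r => ∫ θ in (0:ℝ)..π / 2, θ * abelLogTan r θ) (𝓝[<] 1)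
      (𝓝 (∫ θ in (0:ℝ)..π / 2, θ * log (tan θ))) := by
  have hπ : (0 : ℝ) ≤ π / 2 := by positivity
  refine intervalIntegral.tendsto_integral_filter_of_dominated_convergence
    (fun θ => π * (log 2 - log (sin (2 * θ)))) (.of_forall fun r => by unfold abelLogTan; fun_prop)
    ?_ ((intervalIntegrable_const.sub intervalIntegrable_log_sin_two_mul).const_mul π) ?_
  · filter_upwards [Ioo_mem_nhdsLT (show (-1 : ℝ) < 1 by norm_num)] with r hr
    refine ae_mem_uIoc_imp_of_forall_mem_Ioo hπ fun θ hθ => ?_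
    have hsin : 0 < sin (2 * θ) :=
      sin_pos_of_pos_of_lt_pi (by linarith [hθ.1]) (by linarith [hθ.2])
    rw [norm_mul, norm_eq_abs, norm_eq_abs, abs_of_pos hθ.1]
    calc θ * |abelLogTan r θ| ≤ π / 2 * (2 * (log 2 - log (sin (2 * θ)))) := by
          gcongr
          · exact hθ.2.le
          · exact abs_abelLogTan_le (abs_le.2 ⟨hr.1.le, hr.2.le⟩) hsin
      _ = π * (log 2 - log (sin (2 * θ))) := by ring
  · refine ae_mem_uIoc_imp_of_forall_mem_Ioo hπ fun θ hθ => ?_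
    have hs : sin θ ≠ 0 := (sin_pos_of_pos_of_lt_pi hθ.1 (by linarith [hθ.2, pi_pos])).ne'
    have hc : cos θ ≠ 0 := (cos_pos_of_mem_Ioo ⟨by linarith [hθ.1], hθ.2⟩).ne'
    exact ((tendsto_abelLogTan_one hs hc).mono_left nhdsWithin_le_nhds).const_mul θ

lemma tendsto_tsum_mul_pow_nhdsLT_one {a : ℕ → ℝ} (ha : Summable a) (m : ℕ → ℕ) :
    Tendsto (fun r => ∑' k, a k * r ^ m k) (𝓝[<] 1) (𝓝 (∑' k, a k)) := by
  refine tendsto_tsum_of_dominated_convergence ha.abs (fun k => ?_) ?_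
  · simpa using (((continuous_pow (m k)).tendsto 1).mono_left nhdsWithin_le_nhds).const_mul (a k)
  · filter_upwards [Ioo_mem_nhdsLT (show (-1 : ℝ) < 1 by norm_num)] with r hr k
    rw [norm_mul, norm_pow, norm_eq_abs, norm_eq_abs]
    exact mul_le_of_le_one_right (abs_nonneg _)
      (pow_le_one₀ (abs_nonneg r) (abs_le.2 ⟨hr.1.le, hr.2.le⟩))

lemma summable_one_div_nat_add_one_pow {p : ℕ} (hp : 1 < p) :
    Summable fun n : ℕ => 1 / ((n : ℝ) + 1) ^ p := by
  simpa using (summable_nat_add_iff 1).2 (Real.summable_one_div_nat_pow.2 hp)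

lemma summable_one_div_two_mul_add_one_pow {p : ℕ} (hp : 1 < p) :
    Summable fun k : ℕ => 1 / (2 * (k : ℝ) + 1) ^ p := by
  simpa [Function.comp_def] using (summable_one_div_nat_add_one_pow hp).comp_injective
    (mul_right_injective₀ (two_ne_zero' ℕ))

lemma tsum_one_div_two_mul_add_one_pow {p : ℕ} (hp : 1 < p) :
    ∑' k : ℕ, 1 / (2 * (k : ℝ) + 1) ^ p = (1 - 1 / 2 ^ p) * ∑' n : ℕ, 1 / ((n : ℝ) + 1) ^ p := by
  set f := fun n : ℕ => 1 / ((n : ℝ) + 1) ^ p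
  have hf : Summable f := summable_one_div_nat_add_one_pow hp
  have hodd (k : ℕ) : f (2 * k + 1) = 1 / 2 ^ p * f k := by
    simp only [f]
    push_cast
    rw [show 2 * (k : ℝ) + 1 + 1 = 2 * (k + 1) by ring, mul_pow]
    field_simp
  have hsplit := tsum_even_add_odd (hf.comp_injective (mul_right_injective₀ (two_ne_zero' ℕ)))
    (hf.comp_injective (strictMono_mul_left_of_pos two_pos |>.add_const 1 |>.injective))
  calc ∑' k : ℕ, 1 / (2 * (k : ℝ) + 1) ^ p = ∑' k, f (2 * k) := by simp [f]
    _ = ∑' n, f n - ∑' k, f (2 * k + 1) := by rw [← hsplit]; ring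
    _ = (1 - 1 / 2 ^ p) * ∑' n, f n := by simp only [hodd, tsum_mul_left]; ring

theorem stmt19 :
    (∫ θ in (0:ℝ)..(π/2), θ * Real.log (Real.tan θ))
    = (7/8) * (∑' n : ℕ, (1:ℝ)/(n+1)^3) := by
  have hseries : ∀ᶠ r in 𝓝[<] (1 : ℝ), ∑' k : ℕ, 1 / (2 * (k : ℝ) + 1) ^ 3 * r ^ (2 * k + 1)
      = ∫ θ in (0:ℝ)..π / 2, θ * abelLogTan r θ := by
    filter_upwards [Ioo_mem_nhdsLT (show (-1 : ℝ) < 1 by norm_num)] with r hr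
    exact (hasSum_integral_mul_abelLogTan (abs_lt.2 hr)).tsum_eq
  have hlim := (tendsto_tsum_mul_pow_nhdsLT_one
    (summable_one_div_two_mul_add_one_pow (by norm_num : 1 < 3)) (2 * · + 1)).congr' hseries
  rw [tendsto_nhds_unique tendsto_integral_mul_abelLogTan hlim,
    tsum_one_div_two_mul_add_one_pow (by norm_num : 1 < 3)]
  norm_num
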